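/- For the commutative triple T = (k[x], k[x²], ι) with ι the inclusion, the module of secondary Kähler differentials Ω¹_{T|k} is nontrivial (i.e., nonzero). -/
import Mathlib


open TensorProduct

section

variable (k A B : Type*) [Field k] [CharZero k]
  [CommRing A] [CommRing B] [Algebra k A] [Algebra k B] (ε : B →ₐ[k] A)

/-- The relations defining the secondary Kähler differentials: `k`-linearity of `d`,
the secondary Leibniz rule, and `d(α⊗1) + d(α⊗1) = d(1⊗ε(α))`, inside the free
`A`-module on the symbols `d(t)` for `t ∈ B ⊗ A`. -/
def secondaryKaehlerRels : Set (TensorProduct k B A →₀ A) :=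
  {r | (∃ (l m : k) (x y : TensorProduct k B A),
          r = Finsupp.single (l • x + m • y) (1 : A)
            - l • Finsupp.single x (1 : A) - m • Finsupp.single y (1 : A)) ∨
       (∃ (α β : B) (a b : A),
          r = Finsupp.single ((α ⊗ₜ[k] a) * (β ⊗ₜ[k] b)) (1 : A)
            - (a * ε α) • Finsupp.single (β ⊗ₜ[k] b) (1 : A)
            - (b * ε β) • Finsupp.single (α ⊗ₜ[k] a) (1 : A)) ∨
       (∃ α : B,
          r = Finsupp.single (α ⊗ₜ[k] (1 : A)) (1 : A)
            + Finsupp.single (α ⊗ₜ[k] (1 : A)) (1 : A)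
            - Finsupp.single ((1 : B) ⊗ₜ[k] ε α) (1 : A))}

/-- The module of secondary Kähler differentials `Ω¹_{T|k}` of the commutative triple
`T = (A,B,ε)`: the free `A`-module on symbols `d(t)`, `t ∈ B ⊗ A`, modulo the relations. -/
abbrev secondaryKaehler : Type _ :=
  (TensorProduct k B A →₀ A) ⧸ Submodule.span A (secondaryKaehlerRels k A B ε)

/-- The canonical map `d : B ⊗ A → Ω¹_{T|k}`, `t ↦ d(t)`. -/
noncomputable def secondaryKaehlerD (t : TensorProduct k B A) : secondaryKaehler k A B ε :=
  Submodule.Quotient.mk (Finsupp.single t (1 : A))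

/-- The subalgebra `k[x²]` of `k[x]`. -/
noncomputable def evenSub (k : Type*) [Field k] : Subalgebra k (Polynomial k) :=
  Algebra.adjoin k {(Polynomial.X ^ 2 : Polynomial k)}

noncomputable def secDbil (k : Type*) [Field k] :
    (evenSub k) →ₗ[k] Polynomial k →ₗ[k] Polynomial k :=
  LinearMap.mk₂ k
    (fun g h => (g : Polynomial k) * Polynomial.derivative h
      + Polynomial.C ((2:k)⁻¹) * h * Polynomial.derivative (g : Polynomial k))
    (by intro g g' h
        simp [mul_add, add_mul]
        ring)
    (by intro c g h
        simp [Polynomial.smul_eq_C_mul, Algebra.smul_def, mul_add]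
        ring)
    (by intro g h h'
        simp [mul_add, add_mul]
        ring)
    (by intro c g h
        simp [Polynomial.smul_eq_C_mul, Algebra.smul_def, mul_add]
        ring)

noncomputable def secDlin (k : Type*) [Field k] [CharZero k] :
    TensorProduct k (evenSub k) (Polynomial k) →ₗ[k] Polynomial k :=
  TensorProduct.lift (secDbil k)

lemma secDlin_tmul (k : Type*) [Field k] [CharZero k] (g : evenSub k) (h : Polynomial k) :
    secDlin k (g ⊗ₜ[k] h) = (g : Polynomial k) * Polynomial.derivative h
      + Polynomial.C ((2:k)⁻¹) * h * Polynomial.derivative (g : Polynomial k) := rfl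

noncomputable def secPhi (k : Type*) [Field k] [CharZero k] :
    (TensorProduct k (evenSub k) (Polynomial k) →₀ Polynomial k) →ₗ[Polynomial k] Polynomial k :=
  Finsupp.linearCombination (Polynomial k) (fun t => secDlin k t)

set_option maxHeartbeats 1000000 in
set_option synthInstance.maxHeartbeats 400000 in
lemma secPhi_vanish (k : Type*) [Field k] [CharZero k] :
    ∀ r ∈ secondaryKaehlerRels k (Polynomial k) (evenSub k) (evenSub k).val,
      secPhi k r = 0 := by
  rintro r (⟨l, m, x, y, rfl⟩ | ⟨α, β, a, b, rfl⟩ | ⟨α, rfl⟩)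
  · rw [map_sub, map_sub, LinearMap.map_smul_of_tower, LinearMap.map_smul_of_tower]
    simp only [secPhi, Finsupp.linearCombination_single, one_smul, map_add, map_smul]
    abel
  · rw [map_sub, map_sub, map_smul, map_smul]
    simp only [secPhi, Finsupp.linearCombination_single, one_smul]
    rw [Algebra.TensorProduct.tmul_mul_tmul]
    simp only [secDlin_tmul, smul_eq_mul]
    push_cast
    simp only [Polynomial.derivative_mul, Subalgebra.val_apply]
    ring
  · rw [map_sub, map_add]
    simp only [secPhi, Finsupp.linearCombination_single, one_smul, secDlin_tmul]
    simp only [Polynomial.derivative_one, OneMemClass.coe_one, mul_zero, mul_one, zero_add,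
      one_mul, add_zero]
    have h2 : (Polynomial.C ((2:k)⁻¹) + Polynomial.C ((2:k)⁻¹) : Polynomial k) = 1 := by
      rw [← Polynomial.C_add]
      norm_num
    simp only [Subalgebra.val_apply]
    linear_combination (Polynomial.derivative ((α : Polynomial k))) * h2

set_option maxHeartbeats 1000000 in
set_option synthInstance.maxHeartbeats 400000 in
/-- For the commutative triple `T = (k[x], k[x²], ι)` with `ι` the inclusion,
the module of secondary Kähler differentials `Ω¹_{T|k}` is nonzero. -/
theorem secondaryKaehler_polynomial_nontrivial (k : Type*) [Field k] [CharZero k] :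
    Nontrivial (secondaryKaehler k (Polynomial k) (evenSub k) (evenSub k).val) := by
  refine ⟨secondaryKaehlerD k (Polynomial k) (evenSub k) (evenSub k).val
    ((1 : evenSub k) ⊗ₜ[k] Polynomial.X), 0, ?_⟩
  intro h
  have hmem : Finsupp.single ((1 : evenSub k) ⊗ₜ[k] (Polynomial.X : Polynomial k))
      (1 : Polynomial k) ∈
      Submodule.span (Polynomial k)
        (secondaryKaehlerRels k (Polynomial k) (evenSub k) (evenSub k).val) := by
    rwa [secondaryKaehlerD, Submodule.Quotient.mk_eq_zero] at h
  have hker : Submodule.span (Polynomial k)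
      (secondaryKaehlerRels k (Polynomial k) (evenSub k) (evenSub k).val) ≤
      LinearMap.ker (secPhi k) := by
    rw [Submodule.span_le]
    intro r hr
    exact secPhi_vanish k r hr
  have := hker hmem
  rw [LinearMap.mem_ker] at this
  simp only [secPhi, Finsupp.linearCombination_single, one_smul, secDlin_tmul] at this
  simp at this

end
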